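/- arXiv:0907.2784 — 3 statements merged into one kernel-verified Lean document; each statement's English description precedes it below -/
import Mathlib

section
/- In the weight lattice of E₆, for every integer i with 1 ≤ i ≤ 12, the weight ω₆ - i·ω₁ + ρ is singular, i.e., it is orthogonal to some coroot of E₆. -/
open Finset

namespace E6

/-- The Cartan matrix of `E₆` in Bourbaki numbering. -/
def A : Fin 6 → Fin 6 → ℤ :=
  ![![2, 0, -1, 0, 0, 0],
    ![0, 2, 0, -1, 0, 0],
    ![-1, 0, 2, -1, 0, 0],
    ![0, -1, -1, 2, -1, 0],
    ![0, 0, 0, -1, 2, -1],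
    ![0, 0, 0, 0, -1, 2]]

/-- The weight lattice of `E₆`, with coordinates in the basis of fundamental weights. -/
abbrev Wt := Fin 6 → ℤ

/-- The fundamental weight `ωᵢ₊₁` (Bourbaki numbering; `ω 0 = ω₁`, ..., `ω 5 = ω₆`). -/
def ω (i : Fin 6) : Wt := fun j => if j = i then 1 else 0

/-- `ρ`, the sum of the fundamental weights. -/
def ρ : Wt := fun _ => 1

/-- The simple reflection `s_{αᵢ₊₁}` on the weight lattice, in fundamental weight
coordinates: `sᵢ(λ) = λ - ⟨λ, αᵢ∨⟩ αᵢ`. -/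
def reflFun (i : Fin 6) (l : Wt) : Wt := fun j => l j - l i * A i j

lemma A_diag (i : Fin 6) : A i i = 2 := by fin_cases i <;> rfl

lemma refl_invol (i : Fin 6) (l : Wt) : reflFun i (reflFun i l) = l := by
  funext j
  simp only [reflFun]
  rw [A_diag]
  ring

/-- The simple reflection as a bijection of the weight lattice. -/
def s (i : Fin 6) : Equiv.Perm Wt :=
  ⟨reflFun i, reflFun i, refl_invol i, refl_invol i⟩

/-- The Weyl group `W(E₆)`, realized faithfully on the weight lattice as the group
generated by the simple reflections. -/
def W : Subgroup (Equiv.Perm Wt) := Subgroup.closure (Set.range s)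

/-- The simple root `αᵢ₊₁` written in fundamental weight coordinates (the `i`-th row of
the Cartan matrix). -/
def α (i : Fin 6) : Wt := A i

/-- A weight is singular if it is orthogonal to some coroot, i.e. some Weyl translate of it
has a vanishing pairing with a simple coroot. -/
def Singular (l : Wt) : Prop := ∃ w ∈ W, ∃ j : Fin 6, w l j = 0

/-- A weight is strictly dominant if it pairs positively with every simple coroot. -/
def StrictDominant (l : Wt) : Prop := ∀ j, 0 < l j

/-- A weight is dominant if it pairs nonnegatively with every simple coroot. -/
def Dominant (l : Wt) : Prop := ∀ j, 0 ≤ l j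

/-- The product of a word in the simple reflections. -/
def WordProd (l : List (Fin 6)) : Equiv.Perm Wt := (l.map s).prod

/-- `w` has length `n`: it is a product of `n` simple reflections and of no fewer. -/
def LengthIs (w : Equiv.Perm Wt) (n : ℕ) : Prop :=
  (∃ l : List (Fin 6), l.length = n ∧ WordProd l = w) ∧
  ∀ l : List (Fin 6), WordProd l = w → n ≤ l.length

/-- Length with respect to words using only letters from `S`. -/
def LengthIsOn (S : Set (Fin 6)) (w : Equiv.Perm Wt) (n : ℕ) : Prop :=
  (∃ l : List (Fin 6), (∀ i ∈ l, i ∈ S) ∧ l.length = n ∧ WordProd l = w) ∧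
  ∀ l : List (Fin 6), (∀ i ∈ l, i ∈ S) → WordProd l = w → n ≤ l.length

/-- The roots of `E₆` (in fundamental weight coordinates): the Weyl orbit of the simple roots. -/
def IsRoot (b : Wt) : Prop := ∃ w ∈ W, ∃ i : Fin 6, w (α i) = b

/-- Positive roots: roots which are nonnegative integer combinations of the simple roots. -/
def IsPosRoot (b : Wt) : Prop :=
  IsRoot b ∧ ∃ c : Fin 6 → ℕ, b = fun j => ∑ i, (c i : ℤ) * A i j

/-- The Weyl group of the `D₅` subsystem generated by `s₂, …, s₆`. -/
def WD5 : Subgroup (Equiv.Perm Wt) := Subgroup.closure (s '' {i : Fin 6 | i ≠ 0})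

/-- Lying in the span of the simple roots `α₂, …, α₆` of the `D₅` subsystem. -/
def InD5 (b : Wt) : Prop := ∃ c : Fin 6 → ℤ, c 0 = 0 ∧ b = fun j => ∑ i, c i * A i j

end E6

namespace E6

lemma s_mem_W (i : Fin 6) : s i ∈ W := Subgroup.subset_closure ⟨i, rfl⟩

lemma wordProd_mem_W (word : List (Fin 6)) : WordProd word ∈ W :=
  Subgroup.list_prod_mem W (by simpa using fun i _ => s_mem_W i)

lemma wordProd_apply (word : List (Fin 6)) (l : Wt) :
    WordProd word l = word.foldr reflFun l := by
  induction word with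
  | nil => rfl
  | cons a t ih => exact congrArg (reflFun a) ih

lemma singular_of_foldr_reflFun_eq_zero {l : Wt} (word : List (Fin 6)) (j : Fin 6)
    (h : word.foldr reflFun l j = 0) : Singular l :=
  ⟨WordProd word, wordProd_mem_W word, j, by rwa [wordProd_apply]⟩

/- For `β∨ = ∑ cₖ αₖ∨` one has `⟨ω₆ - i ω₁ + ρ, β∨⟩ = c₆ + ht β - i c₁`. Each word below maps
`ω₆ - i ω₁ + ρ` to a weight orthogonal to `αⱼ∨`, i.e. exhibits the positive root
`β = word⁻¹ αⱼ`, which has `c₁ = 1` and `ht β + c₆ = i`. -/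
/-- for `1 ≤ i ≤ 12`, the weight `ω₆ - i·ω₁ + ρ` is singular. -/
theorem stmt4 :
    ∀ i : ℤ, 1 ≤ i → i ≤ 12 → Singular (ω 5 - i • ω 0 + ρ) := by
  intro i h1 h2
  interval_cases i
  · exact singular_of_foldr_reflFun_eq_zero [] 0 (by decide)
  · exact singular_of_foldr_reflFun_eq_zero [0] 2 (by decide)
  · exact singular_of_foldr_reflFun_eq_zero [2, 0] 3 (by decide)
  · exact singular_of_foldr_reflFun_eq_zero [2, 1, 0] 3 (by decide)
  · exact singular_of_foldr_reflFun_eq_zero [3, 2, 1, 0] 4 (by decide)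
  · exact singular_of_foldr_reflFun_eq_zero [4, 3, 2, 0] 5 (by decide)
  · exact singular_of_foldr_reflFun_eq_zero [4, 3, 2, 1, 0] 5 (by decide)
  · exact singular_of_foldr_reflFun_eq_zero [4, 3, 2, 1, 3, 0] 5 (by decide)
  · exact singular_of_foldr_reflFun_eq_zero [4, 3, 2, 1, 3, 4, 0] 5 (by decide)
  · exact singular_of_foldr_reflFun_eq_zero [4, 3, 2, 1, 3, 4, 0, 2] 5 (by decide)
  · exact singular_of_foldr_reflFun_eq_zero [4, 3, 2, 1, 3, 4, 0, 2, 3] 5 (by decide)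
  · exact singular_of_foldr_reflFun_eq_zero [4, 3, 2, 1, 3, 4, 0, 2, 3, 1] 5 (by decide)

end E6
end

section
/- In the weight lattice of E₆, the Weyl group orbit of the weight ω₆ - 13·ω₁ + ρ contains the strictly dominant weight ω₁ + ρ, and the unique Weyl group element w with w(ω₆ - 13ω₁ + ρ) = ω₁ + ρ has length 16. -/
open Finset

namespace E6

/-! ### Auxiliary development for statement 5 -/

/-- `3 A⁻¹`, an integer matrix since `det A = 3`. -/
def Qm : Fin 6 → Fin 6 → ℤ :=
  ![![4,3,5,6,4,2],![3,6,6,9,6,3],![5,6,10,12,8,4],![6,9,12,18,12,6],![4,6,8,12,10,5],![2,3,4,6,5,4]]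

/-- A `W`-invariant bilinear form (3 times the standard form, in fundamental weight coords). -/
def F (x y : Wt) : ℤ := ∑ a, x a * ∑ b, Qm a b * y b

lemma QA : ∀ a j : Fin 6, (∑ b, Qm a b * A j b) = if a = j then 3 else 0 := by decide

lemma Qm_symm : ∀ a b : Fin 6, Qm a b = Qm b a := by decide

lemma F_expand (x y : Wt) : F x y = ∑ a, ∑ b, x a * Qm a b * y b := by
  simp only [F, Finset.mul_sum]
  exact Finset.sum_congr rfl fun a _ => Finset.sum_congr rfl fun b _ => by ring

lemma F_symm (x y : Wt) : F x y = F y x := by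
  rw [F_expand, F_expand, Finset.sum_comm]
  refine Finset.sum_congr rfl fun a _ => Finset.sum_congr rfl fun b _ => ?_
  rw [Qm_symm]
  ring

lemma F_alpha_right (x : Wt) (j : Fin 6) : F x (α j) = 3 * x j := by
  have h : ∀ a : Fin 6, (∑ b, Qm a b * α j b) = if a = j then 3 else 0 := fun a => QA a j
  simp only [F, h, mul_ite, mul_zero]
  rw [Finset.sum_ite_eq' Finset.univ j (fun a => x a * 3)]
  simp [mul_comm]

lemma F_alpha_left (y : Wt) (j : Fin 6) : F (α j) y = 3 * y j := by
  rw [F_symm]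
  exact F_alpha_right y j

lemma F_sub_left (x z y : Wt) (c : ℤ) :
    F (fun a => x a - c * z a) y = F x y - c * F z y := by
  simp only [F_expand, sub_mul, Finset.sum_sub_distrib, Finset.mul_sum]
  congr 1
  refine Finset.sum_congr rfl fun a _ => Finset.sum_congr rfl fun b _ => ?_
  ring

lemma F_sub_right (x y z : Wt) (c : ℤ) :
    F x (fun b => y b - c * z b) = F x y - c * F x z := by
  rw [F_symm, F_sub_left, F_symm y x, F_symm z x]

lemma F_neg_right (x y : Wt) : F x (-y) = -(F x y) := by
  have h : F x (-y) = F x (fun b => (0:ℤ) - 1 * y b) := by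
    congr 1
    funext b
    show -(y b) = 0 - 1 * y b
    ring
  rw [h, F_sub_right]
  have h0 : F x (fun _ => (0:ℤ)) = 0 := by simp [F]
  rw [h0]
  ring

lemma alpha_apply (i j : Fin 6) : α i j = A i j := rfl

lemma reflFun_eq (i : Fin 6) (x : Wt) : reflFun i x = fun a => x a - x i * α i a := rfl

lemma F_refl (i : Fin 6) (x y : Wt) : F (reflFun i x) (reflFun i y) = F x y := by
  rw [reflFun_eq, reflFun_eq, F_sub_left, F_sub_right, F_sub_right,
    F_alpha_left, F_alpha_left, F_alpha_right]
  have h2 : α i i = 2 := A_diag i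
  rw [h2]
  ring

/-- The `36` positive roots of `E₆` in fundamental weight coordinates. -/
def PRl : List Wt := [
![-1, -1, 1, 0, 0, 1], ![-1, -1, 1, 0, 1, -1], ![-1, -1, 1, 1, -1, 0], ![-1, 0, 0, 0, 1, 0],
![-1, 0, 0, 1, -1, 1], ![-1, 0, 0, 1, 0, -1], ![-1, 0, 2, -1, 0, 0], ![-1, 1, 1, -1, 0, 1],
![-1, 1, 1, -1, 1, -1], ![-1, 1, 1, 0, -1, 0], ![0, -1, -1, 1, 0, 1], ![0, -1, -1, 1, 1, -1],
![0, -1, -1, 2, -1, 0], ![0, -1, 0, 1, 0, 0], ![0, 0, 0, -1, 1, 1], ![0, 0, 0, -1, 2, -1],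
![0, 0, 0, 0, -1, 2], ![0, 0, 1, -1, 1, 0], ![0, 0, 1, 0, -1, 1], ![0, 0, 1, 0, 0, -1],
![0, 1, -1, 0, 0, 1], ![0, 1, -1, 0, 1, -1], ![0, 1, -1, 1, -1, 0], ![0, 1, 0, 0, 0, 0],
![0, 2, 0, -1, 0, 0], ![1, -1, 0, 0, 0, 1], ![1, -1, 0, 0, 1, -1], ![1, -1, 0, 1, -1, 0],
![1, 0, -1, 0, 1, 0], ![1, 0, -1, 1, -1, 1], ![1, 0, -1, 1, 0, -1], ![1, 0, 1, -1, 0, 0],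
![1, 1, 0, -1, 0, 1], ![1, 1, 0, -1, 1, -1], ![1, 1, 0, 0, -1, 0], ![2, 0, -1, 0, 0, 0]]

def PR : Finset Wt := PRl.toFinset

def NR : Finset Wt := PR.image (fun b => -b)

lemma alpha_mem : ∀ i : Fin 6, α i ∈ PR := by decide

lemma refl_mem : ∀ i : Fin 6, ∀ b ∈ PR, b ≠ α i → reflFun i b ∈ PR := by decide

lemma PR_NR_disj : ∀ x ∈ PR, x ∉ NR := by decide

lemma F_mu_pos : ∀ b ∈ PR, 0 < F (ω 0 + ρ) b := by decide

lemma neg_mem_NR {x : Wt} : -x ∈ NR ↔ x ∈ PR := by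
  constructor
  · intro h
    obtain ⟨y, hy, he⟩ := Finset.mem_image.mp h
    have hyx : y = x := by
      have := congrArg Neg.neg he
      simpa using this
    rwa [hyx] at hy
  · intro h
    exact Finset.mem_image_of_mem _ h

lemma mem_NR {x : Wt} : x ∈ NR ↔ -x ∈ PR := by
  rw [← neg_mem_NR, neg_neg]

lemma refl_alpha (i : Fin 6) : reflFun i (α i) = -α i := by
  funext j
  show A i j - A i i * A i j = -(A i j)
  rw [A_diag]
  ring

lemma refl_neg (i : Fin 6) (x : Wt) : reflFun i (-x) = -(reflFun i x) := by
  funext j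
  show (-x) j - (-x) i * A i j = -(x j - x i * A i j)
  show -(x j) - (-(x i)) * A i j = -(x j - x i * A i j)
  ring

lemma s_apply (i : Fin 6) (x : Wt) : s i x = reflFun i x := rfl

lemma perm_mul_apply (g h : Equiv.Perm Wt) (x : Wt) : (g * h) x = g (h x) := rfl

/-- Bundle of properties enjoyed by every word product. -/
def Nice (g : Equiv.Perm Wt) : Prop :=
  (∀ (x y : Wt) (c : ℤ), g (fun a => x a - c * y a) = fun a => g x a - c * g y a) ∧
  (∀ x y, F (g x) (g y) = F x y) ∧
  (∀ x, x ∈ PR ∪ NR → g x ∈ PR ∪ NR) ∧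
  (∀ x, g (-x) = -(g x))

lemma nice_one : Nice 1 :=
  ⟨fun _ _ _ => rfl, fun _ _ => rfl, fun _ h => h, fun _ => rfl⟩

lemma nice_s (i : Fin 6) : Nice (s i) := by
  refine ⟨?_, ?_, ?_, ?_⟩
  · intro x y c
    funext a
    show (fun a => x a - c * y a) a - (fun a => x a - c * y a) i * A i a
        = (x a - x i * A i a) - c * (y a - y i * A i a)
    show (x a - c * y a) - (x i - c * y i) * A i a
        = (x a - x i * A i a) - c * (y a - y i * A i a)
    ring
  · intro x y
    exact F_refl i x y
  · intro x hx
    rcases Finset.mem_union.mp hx with hP | hN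
    · by_cases hb : x = α i
      · subst hb
        rw [s_apply, refl_alpha]
        exact Finset.mem_union_right _ (neg_mem_NR.mpr (alpha_mem i))
      · exact Finset.mem_union_left _ (refl_mem i x hP hb)
    · have hxP : -x ∈ PR := mem_NR.mp hN
      have hrw : s i x = -(reflFun i (-x)) := by
        rw [s_apply, ← refl_neg, neg_neg]
      by_cases hb : -x = α i
      · rw [hrw, hb, refl_alpha, neg_neg]
        exact Finset.mem_union_left _ (alpha_mem i)
      · rw [hrw]
        exact Finset.mem_union_right _ (neg_mem_NR.mpr (refl_mem i (-x) hxP hb))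
  · intro x
    exact refl_neg i x

lemma nice_mul {g h : Equiv.Perm Wt} (hg : Nice g) (hh : Nice h) : Nice (g * h) := by
  refine ⟨?_, ?_, ?_, ?_⟩
  · intro x y c
    rw [perm_mul_apply, hh.1, hg.1]
    rfl
  · intro x y
    rw [perm_mul_apply, perm_mul_apply, hg.2.1, hh.2.1]
  · intro x hx
    exact hg.2.2.1 _ (hh.2.2.1 _ hx)
  · intro x
    rw [perm_mul_apply, hh.2.2.2, hg.2.2.2]
    rfl

lemma wordProd_nil : WordProd [] = 1 := rfl

lemma wordProd_cons (i : Fin 6) (l : List (Fin 6)) :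
    WordProd (i :: l) = s i * WordProd l := by
  simp [WordProd]

lemma wordProd_singleton (i : Fin 6) : WordProd [i] = s i := by
  simp [WordProd]

lemma wordProd_append (l₁ l₂ : List (Fin 6)) :
    WordProd (l₁ ++ l₂) = WordProd l₁ * WordProd l₂ := by
  simp [WordProd]

lemma s_inv (i : Fin 6) : (s i)⁻¹ = s i := by
  apply Equiv.ext
  intro x
  rfl

lemma s_mul_self (i : Fin 6) : s i * s i = 1 := by
  apply Equiv.ext
  intro x
  exact refl_invol i x

lemma wordProd_inv (l : List (Fin 6)) : (WordProd l)⁻¹ = WordProd l.reverse := by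
  induction l with
  | nil => simp [WordProd]
  | cons i l ih =>
    rw [wordProd_cons, mul_inv_rev, ih, s_inv, List.reverse_cons, wordProd_append,
      wordProd_singleton]

lemma nice_word (l : List (Fin 6)) : Nice (WordProd l) := by
  induction l with
  | nil => exact nice_one
  | cons i l ih =>
    rw [wordProd_cons]
    exact nice_mul (nice_s i) ih

lemma wordProd_mem (l : List (Fin 6)) : WordProd l ∈ W := by
  induction l with
  | nil => exact one_mem W
  | cons i l ih =>
    rw [wordProd_cons]
    exact mul_mem (Subgroup.subset_closure ⟨i, rfl⟩) ih

lemma exists_word {v : Equiv.Perm Wt} (hv : v ∈ W) : ∃ l, WordProd l = v := by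
  induction hv using Subgroup.closure_induction with
  | mem x hx =>
    obtain ⟨i, rfl⟩ := hx
    exact ⟨[i], wordProd_singleton i⟩
  | one => exact ⟨[], rfl⟩
  | mul x y hx hy ihx ihy =>
    obtain ⟨l₁, rfl⟩ := ihx
    obtain ⟨l₂, rfl⟩ := ihy
    exact ⟨l₁ ++ l₂, wordProd_append l₁ l₂⟩
  | inv x hx ihx =>
    obtain ⟨l, rfl⟩ := ihx
    exact ⟨l.reverse, (wordProd_inv l).symm⟩

/-- Inversion set of `g`: positive roots sent to negative roots. -/
def InvS (g : Equiv.Perm Wt) : Finset Wt := PR.filter (fun b => g b ∈ NR)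

/-- Inversion number. -/
def nInv (g : Equiv.Perm Wt) : ℕ := (InvS g).card

lemma reflFun_inj (i : Fin 6) : Function.Injective (reflFun i) := (s i).injective

lemma invS_subset_PR (g : Equiv.Perm Wt) : InvS g ⊆ PR := Finset.filter_subset _ _

lemma invS_mul_s (u : Equiv.Perm Wt) (k : Fin 6) (hneg : ∀ x, u (-x) = -(u x)) :
    InvS (u * s k) =
      ((InvS u).erase (α k)).image (reflFun k) ∪
        (if u (α k) ∈ PR then {α k} else ∅) := by
  ext b
  simp only [InvS, Finset.mem_union, Finset.mem_filter, Finset.mem_image, Finset.mem_erase]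
  constructor
  · rintro ⟨hbPR, hbN⟩
    rw [perm_mul_apply, s_apply] at hbN
    by_cases hb : b = α k
    · subst hb
      rw [refl_alpha, hneg] at hbN
      have hP : u (α k) ∈ PR := by
        have := mem_NR.mp hbN
        rwa [neg_neg] at this
      right
      rw [if_pos hP]
      exact Finset.mem_singleton_self _
    · left
      have h1 : reflFun k b ∈ PR := refl_mem k b hbPR hb
      have h2 : reflFun k b ≠ α k := by
        intro he
        have hb1 : b = reflFun k (α k) := by
          rw [← he, refl_invol]
        rw [refl_alpha] at hb1
        have hb2 : -b ∈ PR := by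
          rw [hb1, neg_neg]
          exact alpha_mem k
        exact PR_NR_disj b hbPR (mem_NR.mpr hb2)
      exact ⟨reflFun k b, ⟨h2, h1, hbN⟩, refl_invol k b⟩
  · rintro (⟨b', ⟨hne, hb'PR, hb'N⟩, rfl⟩ | h)
    · have h2 : reflFun k b' ∈ PR := refl_mem k b' hb'PR hne
      refine ⟨h2, ?_⟩
      rw [perm_mul_apply, s_apply, refl_invol]
      exact hb'N
    · by_cases hc : u (α k) ∈ PR
      · rw [if_pos hc, Finset.mem_singleton] at h
        subst h
        refine ⟨alpha_mem k, ?_⟩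
        rw [perm_mul_apply, s_apply, refl_alpha, hneg]
        exact neg_mem_NR.mpr hc
      · rw [if_neg hc] at h
        exact absurd h (Finset.notMem_empty _)

lemma alpha_not_mem_image (k : Fin 6) (g : Equiv.Perm Wt) :
    α k ∉ ((InvS g).erase (α k)).image (reflFun k) := by
  intro h
  obtain ⟨b', hb', he⟩ := Finset.mem_image.mp h
  obtain ⟨hne, hmem⟩ := Finset.mem_erase.mp hb'
  have hPR : b' ∈ PR := invS_subset_PR g hmem
  have h1 : b' = reflFun k (α k) := by rw [← he, refl_invol]
  rw [refl_alpha] at h1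
  have h2 : -b' ∈ PR := by
    rw [h1, neg_neg]
    exact alpha_mem k
  exact PR_NR_disj b' hPR (mem_NR.mpr h2)

lemma nInv_case_pos {u : Equiv.Perm Wt} (hneg : ∀ x, u (-x) = -(u x)) (k : Fin 6)
    (h : u (α k) ∈ PR) : nInv (u * s k) = nInv u + 1 := by
  have hset := invS_mul_s u k hneg
  rw [if_pos h] at hset
  have hnot : α k ∉ InvS u := by
    intro hmem
    exact PR_NR_disj _ h (Finset.mem_filter.mp hmem).2
  have hdisj : Disjoint (((InvS u).erase (α k)).image (reflFun k)) ({α k} : Finset Wt) := by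
    rw [Finset.disjoint_singleton_right]
    exact alpha_not_mem_image k u
  unfold nInv
  rw [hset, Finset.card_union_of_disjoint hdisj,
    Finset.card_image_of_injective _ (reflFun_inj k), Finset.card_singleton,
    Finset.erase_eq_of_notMem hnot]

lemma nInv_case_neg {u : Equiv.Perm Wt} (hneg : ∀ x, u (-x) = -(u x)) (k : Fin 6)
    (h : u (α k) ∈ NR) : nInv (u * s k) + 1 = nInv u := by
  have hset := invS_mul_s u k hneg
  have hnotPR : u (α k) ∉ PR := fun hp => PR_NR_disj _ hp h
  rw [if_neg hnotPR, Finset.union_empty] at hset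
  have hmem : α k ∈ InvS u := Finset.mem_filter.mpr ⟨alpha_mem k, h⟩
  unfold nInv
  rw [hset, Finset.card_image_of_injective _ (reflFun_inj k)]
  exact Finset.card_erase_add_one hmem

lemma conj_lemma (u : Equiv.Perm Wt) (hu : Nice u) (k i : Fin 6)
    (h : u (α k) = α i) : u * s k = s i * u := by
  apply Equiv.ext
  intro x
  rw [perm_mul_apply, perm_mul_apply, s_apply, s_apply]
  have hstep : u (reflFun k x) = fun a => u x a - x k * u (α k) a := by
    rw [reflFun_eq, hu.1 x (α k) (x k)]
  have hxk : x k = u x i := by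
    have h2 := hu.2.1 x (α k)
    rw [h, F_alpha_right, F_alpha_right] at h2
    omega
  rw [hstep, h, reflFun_eq]
  funext a
  show u x a - x k * α i a = u x a - u x i * α i a
  rw [hxk]

lemma strip : ∀ (m : List (Fin 6)) (k : Fin 6), WordProd m (α k) ∈ NR →
    ∃ m', m'.length + 1 = m.length ∧ WordProd m' = WordProd m * s k := by
  intro m
  induction m with
  | nil =>
    intro k h
    rw [wordProd_nil] at h
    exact absurd h (PR_NR_disj _ (alpha_mem k))
  | cons i m ih =>
    intro k h
    have hΦ : WordProd m (α k) ∈ PR ∪ NR :=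
      (nice_word m).2.2.1 _ (Finset.mem_union_left _ (alpha_mem k))
    rcases Finset.mem_union.mp hΦ with hP | hN
    · have hc : WordProd m (α k) = α i := by
        by_contra hne
        have h1 : reflFun i (WordProd m (α k)) ∈ PR := refl_mem i _ hP hne
        have h2 : WordProd (i :: m) (α k) = reflFun i (WordProd m (α k)) := by
          rw [wordProd_cons]
          rfl
        rw [h2] at h
        exact PR_NR_disj _ h1 h
      have hconj := conj_lemma (WordProd m) (nice_word m) k i hc
      refine ⟨m, rfl, ?_⟩
      rw [wordProd_cons, mul_assoc, hconj, ← mul_assoc, s_mul_self, one_mul]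
    · obtain ⟨m'', hlen, heq⟩ := ih k hN
      refine ⟨i :: m'', ?_, ?_⟩
      · simp only [List.length_cons]
        omega
      · rw [wordProd_cons, wordProd_cons, mul_assoc, heq]

lemma nInv_one : nInv 1 = 0 := by decide

lemma normal_form : ∀ m : List (Fin 6),
    ∃ m', WordProd m' = WordProd m ∧ m'.length = nInv (WordProd m) := by
  intro m
  induction m using List.reverseRecOn with
  | nil =>
    refine ⟨[], rfl, ?_⟩
    rw [wordProd_nil, nInv_one]
    rfl
  | append_singleton m₀ k ih =>
    obtain ⟨m', hm', hlen⟩ := ih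
    have hu := nice_word m₀
    have happ : WordProd (m₀ ++ [k]) = WordProd m₀ * s k := by
      rw [wordProd_append, wordProd_singleton]
    have hΦ : WordProd m₀ (α k) ∈ PR ∪ NR :=
      hu.2.2.1 _ (Finset.mem_union_left _ (alpha_mem k))
    rcases Finset.mem_union.mp hΦ with hP | hN
    · refine ⟨m' ++ [k], ?_, ?_⟩
      · rw [wordProd_append, wordProd_singleton, hm', happ]
      · rw [happ, nInv_case_pos hu.2.2.2 k hP, List.length_append, List.length_singleton, hlen]
    · obtain ⟨m'', hlen'', heq⟩ := strip m' k (by rw [hm']; exact hN)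
      refine ⟨m'', ?_, ?_⟩
      · rw [heq, hm', happ]
      · have hcase := nInv_case_neg hu.2.2.2 k hN
        rw [happ]
        omega

lemma nInv_le : ∀ m : List (Fin 6), nInv (WordProd m) ≤ m.length := by
  intro m
  induction m using List.reverseRecOn with
  | nil =>
    rw [wordProd_nil, nInv_one]
    exact Nat.zero_le _
  | append_singleton m₀ k ih =>
    have hu := nice_word m₀
    have happ : WordProd (m₀ ++ [k]) = WordProd m₀ * s k := by
      rw [wordProd_append, wordProd_singleton]
    have hΦ : WordProd m₀ (α k) ∈ PR ∪ NR :=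
      hu.2.2.1 _ (Finset.mem_union_left _ (alpha_mem k))
    rw [happ, List.length_append, List.length_singleton]
    rcases Finset.mem_union.mp hΦ with hP | hN
    · rw [nInv_case_pos hu.2.2.2 k hP]
      omega
    · have := nInv_case_neg hu.2.2.2 k hN
      omega

lemma stab_trivial (l : List (Fin 6)) (h : WordProd l (ω 0 + ρ) = ω 0 + ρ) :
    WordProd l = 1 := by
  have hn : nInv (WordProd l) = 0 := by
    unfold nInv InvS
    rw [Finset.card_eq_zero, Finset.filter_eq_empty_iff]
    intro b hb hbN
    have h1 : 0 < F (ω 0 + ρ) b := F_mu_pos b hb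
    have h2 : F (ω 0 + ρ) (WordProd l b) = F (ω 0 + ρ) b := by
      conv_lhs => rw [← h]
      exact (nice_word l).2.1 _ _
    have h3 : 0 < F (ω 0 + ρ) (-(WordProd l b)) := F_mu_pos _ (mem_NR.mp hbN)
    rw [F_neg_right] at h3
    omega
  obtain ⟨m', hm', hlen⟩ := normal_form l
  rw [hn, List.length_eq_zero_iff] at hlen
  rw [← hm', hlen, wordProd_nil]

/-- An explicit word of length 16. -/
def L16 : List (Fin 6) := [5,4,3,2,1,3,4,5,0,2,3,4,1,3,2,0]

lemma key_eval : WordProd L16 (ω 5 - (13 : ℤ) • ω 0 + ρ) = ω 0 + ρ := by decide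

lemma nInv_L16 : nInv (WordProd L16) = 16 := by decide

end E6

namespace E6
/-- the Weyl orbit of `ω₆ - 13ω₁ + ρ` contains the strictly dominant weight
`ω₁ + ρ`, and the unique Weyl group element carrying it there has length `16`. -/
theorem stmt5 :
    StrictDominant (ω 0 + ρ) ∧
    ∃ w ∈ W, w (ω 5 - (13 : ℤ) • ω 0 + ρ) = ω 0 + ρ ∧
      (∀ w' ∈ W, w' (ω 5 - (13 : ℤ) • ω 0 + ρ) = ω 0 + ρ → w' = w) ∧
      LengthIs w 16 := by
  have hsd : ∀ j : Fin 6, 0 < (ω 0 + ρ) j := by decide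
  refine ⟨hsd, WordProd L16, wordProd_mem L16, key_eval, ?_, ?_⟩
  · intro w' hw' hval
    obtain ⟨l', rfl⟩ := exists_word hw'
    have h1 : WordProd (l' ++ L16.reverse) (ω 0 + ρ) = ω 0 + ρ := by
      rw [wordProd_append, ← wordProd_inv, perm_mul_apply]
      have h2 : (WordProd L16)⁻¹ (ω 0 + ρ) = (ω 5 - (13 : ℤ) • ω 0 + ρ) := by
        rw [← key_eval]
        exact (WordProd L16).symm_apply_apply _
      rw [h2, hval]
    have h3 := stab_trivial _ h1
    rw [wordProd_append, ← wordProd_inv] at h3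
    exact mul_inv_eq_one.mp h3
  · constructor
    · exact ⟨L16, rfl, rfl⟩
    · intro l hl
      have hb := nInv_le l
      rw [hl, nInv_L16] at hb
      exact hb
end E6
end

section
/- In the weight lattice of E₆, for i = 1 and i = 2 the weight 2ω₅ - (i+2)·ω₁ + ρ is singular, while for i = 3 it is Weyl-conjugate to the strictly dominant weight ρ. -/
open Finset

/-!
Write `λₖ = 2ω₅ - (k+2)ω₁ + ρ = (-1-k, 1, 1, 1, 3, 1)` in fundamental weight coordinates and
reflect successively in `α₁, α₃, α₄, α₂`. Uniformly in `k` this gives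
`(1, 1, k, 1-k, 3, 1)` after `s₃s₁`, `(1, 2-k, 1, k-1, 4-k, 1)` after `s₄s₃s₁` and
`(1, k-2, 1, 1, 4-k, 1)` after `s₂s₄s₃s₁`: the first pairs to zero with `α₄∨` at `k = 1`,
the second with `α₂∨` at `k = 2`, and the last is `ρ` at `k = 3`.
-/

namespace E6

lemma s_apply_s8 (i : Fin 6) (l : Wt) (j : Fin 6) : s i l j = l j - l i * A i j := rfl

section

variable (k : ℤ)

lemma weight_eq : (2 : ℤ) • ω 4 - (k + 2) • ω 0 + ρ = ![-1 - k, 1, 1, 1, 3, 1] := by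
  funext j; fin_cases j <;> simp [ω, ρ]; ring

lemma s0_apply_weight : s 0 ![-1 - k, 1, 1, 1, 3, 1] = ![1 + k, 1, -k, 1, 3, 1] := by
  funext j; fin_cases j <;> simp [s_apply_s8, A]; ring

lemma s2_apply_weight : s 2 ![1 + k, 1, -k, 1, 3, 1] = ![1, 1, k, 1 - k, 3, 1] := by
  funext j; fin_cases j <;> simp [s_apply_s8, A]; ring

lemma s3_apply_weight : s 3 ![1, 1, k, 1 - k, 3, 1] = ![1, 2 - k, 1, k - 1, 4 - k, 1] := by
  funext j; fin_cases j <;> simp [s_apply_s8, A] <;> ring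

lemma s1_apply_weight : s 1 ![1, 2 - k, 1, k - 1, 4 - k, 1] = ![1, k - 2, 1, 1, 4 - k, 1] := by
  funext j; fin_cases j <;> simp [s_apply_s8, A]; ring

end

/-- for `i = 1, 2` the weight `2ω₅ - (i+2)·ω₁ + ρ` is singular, while for
`i = 3` it is Weyl-conjugate to the strictly dominant weight `ρ`. -/
theorem stmt8 :
    Singular ((2 : ℤ) • ω 4 - ((1 : ℤ) + 2) • ω 0 + ρ) ∧
    Singular ((2 : ℤ) • ω 4 - ((2 : ℤ) + 2) • ω 0 + ρ) ∧
    StrictDominant ρ ∧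
    (∃ w ∈ W, w ((2 : ℤ) • ω 4 - ((3 : ℤ) + 2) • ω 0 + ρ) = ρ) := by
  have h₂₀ := mul_mem (s_mem_W 2) (s_mem_W 0)
  have h₃₂₀ := mul_mem (s_mem_W 3) h₂₀
  have h₁₃₂₀ := mul_mem (s_mem_W 1) h₃₂₀
  simp only [weight_eq]
  refine ⟨⟨_, h₂₀, 3, ?_⟩, ⟨_, h₃₂₀, 1, ?_⟩, fun _ => one_pos, ⟨_, h₁₃₂₀, ?_⟩⟩ <;>
    simp only [Equiv.Perm.mul_apply, s0_apply_weight, s2_apply_weight, s3_apply_weight,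
      s1_apply_weight]
  · rfl
  · rfl
  · funext j; fin_cases j <;> rfl

end E6
end
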